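/- Let V be a real Hilbert space and let b_h(v,w) := a(v,w) + η s(v,w) + ℓ(w,v) + ℓ(v,w), where a and s are symmetric positive semidefinite bilinear forms and ℓ is a bilinear form satisfying |ℓ(v,w)|² ≤ C s(v,v) a(w,w) for a constant C > 0. If η ≥ 1/2 + 2C, then b_h(v,v) ≥ (1/2)(a(v,v) + s(v,v)) for all v ∈ V. -/
import Mathlib


/-- Coercivity of the symmetric interior penalty bilinear form
`b_h(v,w) = a(v,w) + η s(v,w) + ℓ(w,v) + ℓ(v,w)`: if `a, s` are symmetric positive
semidefinite bilinear forms on a real Hilbert space, `ℓ` satisfies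
`|ℓ(v,w)|² ≤ C s(v,v) a(w,w)`, and `η ≥ 1/2 + 2C`, then
`b_h(v,v) ≥ (1/2)(a(v,v) + s(v,v))` for all `v`. -/
theorem dg_coercivity (V : Type*) [NormedAddCommGroup V] [InnerProductSpace ℝ V]
    [CompleteSpace V]
    (a s l : V →ₗ[ℝ] V →ₗ[ℝ] ℝ) (C η : ℝ) (hC : 0 < C)
    (hasym : ∀ v w, a v w = a w v) (hapos : ∀ v, 0 ≤ a v v)
    (hssym : ∀ v w, s v w = s w v) (hspos : ∀ v, 0 ≤ s v v)
    (hl : ∀ v w, (l v w) ^ 2 ≤ C * s v v * a w w)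
    (hη : 1 / 2 + 2 * C ≤ η) :
    ∀ v, (1 / 2) * (a v v + s v v) ≤ a v v + η * s v v + l v v + l v v := by
  intro v
  have h1 := hl v v
  have h2 := hapos v
  have h3 := hspos v
  nlinarith [sq_nonneg (a v v / 2 - 2 * C * s v v), sq_nonneg (a v v / 2 + 2 * C * s v v + 2 * l v v), mul_nonneg h3 h2, mul_nonneg (le_of_lt hC) h3, sq_nonneg (l v v), mul_nonneg (sub_nonneg.mpr hη) h3]
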